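/- For hyperhermitian n×n quaternionic matrices A₁,…,Aₙ, the function (λ₁,…,λₙ) ↦ det(λ₁A₁ + ⋯ + λₙAₙ) of real variables λᵢ is a homogeneous polynomial of degree n, and the mixed discriminant det(A₁,…,Aₙ) (1/n! times the coefficient of λ₁λ₂⋯λₙ) is symmetric in its n arguments, is ℝ-linear in each argument (i.e. det(λA′₁ + μA″₁, A₂,…,Aₙ) = λ·det(A′₁, A₂,…,Aₙ) + μ·det(A″₁, A₂,…,Aₙ) for all real λ, μ), and satisfies det(A,…,A) = det A for every hyperhermitian A. -/

import Mathlib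

open Matrix

noncomputable section

/-- The ordered product of the entries of `A` along the cycle of the permutation `σ`
starting at `k`, following the Moore determinant convention:
`a_{k, σk} * a_{σk, σ²k} * ⋯ * a_{σ^{L-1}k, k}` where `L` is the length of the cycle. -/
def cycleFactor {n : ℕ} (A : Matrix (Fin n) (Fin n) (Quaternion ℝ))
    (σ : Equiv.Perm (Fin n)) (k : Fin n) : Quaternion ℝ :=
  ((List.range (Function.minimalPeriod (⇑σ) k)).map
    fun t => A ((⇑σ)^[t] k) ((⇑σ)^[t + 1] k)).prod

/-- The term of the Moore determinant corresponding to the permutation `σ`: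
the (ordered) product of the cycle factors, where each disjoint cycle of `σ`
starts at its minimal element and the cycles are listed with their minima
in decreasing order. -/
def mooreTerm {n : ℕ} (A : Matrix (Fin n) (Fin n) (Quaternion ℝ))
    (σ : Equiv.Perm (Fin n)) : Quaternion ℝ :=
  ((((List.finRange n).filter
        fun k => decide (∀ j ∈ List.range n, k ≤ (⇑σ)^[j] k)).reverse).map
    (cycleFactor A σ)).prod

/-- The Moore determinant of a quaternionic `n × n` matrix, as a real number
(for a hyperhermitian matrix the defining sum is automatically a real quaternion,
so taking the real part loses no information). -/
def mooreDet {n : ℕ} (A : Matrix (Fin n) (Fin n) (Quaternion ℝ)) : ℝ :=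
  (∑ σ : Equiv.Perm (Fin n),
      (((Equiv.Perm.sign σ : ℤ) : ℝ) : Quaternion ℝ) * mooreTerm A σ).re

/-- A quaternionic matrix is nonnegative definite if `ξ*Aξ ≥ 0` for all `ξ`
(for hyperhermitian `A` the quantity `ξ*Aξ` is automatically real). -/
def QuatNonnegDef {n : ℕ} (A : Matrix (Fin n) (Fin n) (Quaternion ℝ)) : Prop :=
  ∀ ξ : Fin n → Quaternion ℝ, 0 ≤ (∑ i, ∑ j, star (ξ i) * A i j * ξ j).re

/-- A quaternionic matrix is positive definite if `ξ*Aξ > 0` for all `ξ ≠ 0`. -/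
def QuatPosDef {n : ℕ} (A : Matrix (Fin n) (Fin n) (Quaternion ℝ)) : Prop :=
  ∀ ξ : Fin n → Quaternion ℝ, ξ ≠ 0 → 0 < (∑ i, ∑ j, star (ξ i) * A i j * ξ j).re

/-- The four quaternionic units `1, i, j, k`. -/
def quatUnit : Fin 4 → Quaternion ℝ := ![1, ⟨0, 1, 0, 0⟩, ⟨0, 0, 1, 0⟩, ⟨0, 0, 0, 1⟩]

/-- The direction in `ℍⁿ` corresponding to the real coordinate axis `e_a` in
the `i`-th quaternionic coordinate. -/
def qdir {n : ℕ} (i : Fin n) (a : Fin 4) : Fin n → Quaternion ℝ :=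
  Pi.single i (quatUnit a)

/-- The quaternionic Hessian `(∂²u/∂q_i∂q̄_j)` of a real-valued function `u` on `ℍⁿ`,
defined through the Cauchy–Riemann–Fueter operators:
`∂²u/∂q_i∂q̄_j = Σ_{a,b} e_a ⬝ (∂²u/∂x_j^a ∂x_i^b) ⬝ conj(e_b)`. -/
def quatHessian {n : ℕ} (u : (Fin n → Quaternion ℝ) → ℝ)
    (q : Fin n → Quaternion ℝ) : Matrix (Fin n) (Fin n) (Quaternion ℝ) :=
  Matrix.of fun i j => ∑ a : Fin 4, ∑ b : Fin 4,
    (fderiv ℝ (fun x => fderiv ℝ u x (qdir i b)) q (qdir j a)) •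
      (quatUnit a * star (quatUnit b))

/-- A (bounded) set has smooth boundary if it is the sublevel set `{ρ < 0}` of a
globally smooth function `ρ` whose differential does not vanish on the boundary. -/
def HasSmoothBoundary {n : ℕ} (Ω : Set (Fin n → Quaternion ℝ)) : Prop :=
  ∃ ρ : (Fin n → Quaternion ℝ) → ℝ, ContDiff ℝ (⊤ : ℕ∞) ρ ∧ Ω = {x | ρ x < 0} ∧
    ∀ x ∈ frontier Ω, fderiv ℝ ρ x ≠ 0

/-- Quaternionic strict pseudoconvexity: every boundary point admits a local smooth,
strictly plurisubharmonic defining function. -/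
def StrictlyPseudoconvex {n : ℕ} (Ω : Set (Fin n → Quaternion ℝ)) : Prop :=
  ∀ z₀ ∈ frontier Ω, ∃ (O : Set (Fin n → Quaternion ℝ))
      (h : (Fin n → Quaternion ℝ) → ℝ),
    IsOpen O ∧ z₀ ∈ O ∧ ContDiffOn ℝ (⊤ : ℕ∞) h O ∧
    (∀ q ∈ O, QuatPosDef (quatHessian h q)) ∧
    Ω ∩ O = {x ∈ O | h x < 0} ∧ h z₀ = 0 ∧ fderiv ℝ h z₀ ≠ 0

/-- The mixed discriminant of `n` quaternionic hyperhermitian `n × n` matrices: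
`1/n!` times the coefficient of `λ₁⋯λₙ` in `mooreDet (λ₁A₁ + ⋯ + λₙAₙ)`, expressed
by the standard polarization (finite difference) formula. -/
def mixedDisc {n : ℕ} (A : Fin n → Matrix (Fin n) (Fin n) (Quaternion ℝ)) : ℝ :=
  ((n.factorial : ℝ))⁻¹ *
    ∑ S : Finset (Fin n), (-1 : ℝ) ^ (n - S.card) * mooreDet (∑ i ∈ S, A i)

/-- `mixedDisc1 X A` is the mixed discriminant `det(X, A[n-1])` of `X` together with
`n - 1` copies of `A`. -/
def mixedDisc1 {n : ℕ} (X A : Matrix (Fin n) (Fin n) (Quaternion ℝ)) : ℝ :=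
  mixedDisc (fun k : Fin n => if (k : ℕ) = 0 then X else A)

namespace MooreAux

open Function

variable {n : ℕ} (σ : Equiv.Perm (Fin n))

lemma perm_periodic (k : Fin n) : k ∈ periodicPts ⇑σ := by
  refine ⟨orderOf σ, orderOf_pos σ, ?_⟩
  show (⇑σ)^[orderOf σ] k = k
  rw [← Equiv.Perm.coe_pow, pow_orderOf_eq_one]; rfl

lemma perm_per_pos (k : Fin n) : 0 < minimalPeriod ⇑σ k :=
  minimalPeriod_pos_of_mem_periodicPts (perm_periodic σ k)

/-- orbit of `k` under `σ` as a Finset -/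
noncomputable def orb (k : Fin n) : Finset (Fin n) :=
  (Finset.range (minimalPeriod ⇑σ k)).image fun j => (⇑σ)^[j] k

lemma card_orb (k : Fin n) : (orb σ k).card = minimalPeriod ⇑σ k := by
  rw [orb, Finset.card_image_of_injOn, Finset.card_range]
  intro a ha b hb hab
  exact iterate_injOn_Iio_minimalPeriod (by simpa using ha) (by simpa using hb) hab

lemma iterate_mem_orb (k : Fin n) (j : ℕ) : (⇑σ)^[j] k ∈ orb σ k := by
  rw [orb, Finset.mem_image]
  exact ⟨j % minimalPeriod ⇑σ k, Finset.mem_range.2 (Nat.mod_lt _ (perm_per_pos σ k)),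
    iterate_mod_minimalPeriod_eq⟩

lemma mem_orb_self (k : Fin n) : k ∈ orb σ k := iterate_mem_orb σ k 0

lemma per_iterate (k : Fin n) (t : ℕ) :
    minimalPeriod ⇑σ ((⇑σ)^[t] k) = minimalPeriod ⇑σ k := by
  induction t with
  | zero => rfl
  | succ t ih => rw [iterate_succ_apply', minimalPeriod_apply (perm_periodic σ _), ih]

lemma orb_iterate (k : Fin n) (t : ℕ) : orb σ ((⇑σ)^[t] k) = orb σ k := by
  apply Finset.eq_of_subset_of_card_le
  · intro x hx
    rw [orb, Finset.mem_image] at hx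
    obtain ⟨j, _, rfl⟩ := hx
    rw [← iterate_add_apply]
    exact iterate_mem_orb σ k (j + t)
  · rw [card_orb, card_orb, per_iterate]

lemma orb_eq_of_mem {k m : Fin n} (h : m ∈ orb σ k) : orb σ m = orb σ k := by
  rw [orb, Finset.mem_image] at h
  obtain ⟨j, _, rfl⟩ := h
  exact orb_iterate σ k j

lemma per_le (k : Fin n) : minimalPeriod ⇑σ k ≤ n := by
  rw [← card_orb]
  simpa using Finset.card_le_card (Finset.subset_univ (orb σ k))

/-- the minimality predicate from the Moore-determinant definition -/
def IsOrbMin (k : Fin n) : Prop := ∀ j ∈ List.range n, k ≤ (⇑σ)^[j] k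

instance : DecidablePred (IsOrbMin σ) :=
  fun k => inferInstanceAs (Decidable (∀ j ∈ List.range n, k ≤ (⇑σ)^[j] k))

lemma isOrbMin_iff (k : Fin n) : IsOrbMin σ k ↔ ∀ x ∈ orb σ k, k ≤ x := by
  constructor
  · rintro h x hx
    rw [orb, Finset.mem_image] at hx
    obtain ⟨j, hj, rfl⟩ := hx
    exact h j (List.mem_range.2 (lt_of_lt_of_le (Finset.mem_range.1 hj) (per_le σ k)))
  · intro h j _
    exact h _ (iterate_mem_orb σ k j)

noncomputable def orbMin (k : Fin n) : Fin n :=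
  (orb σ k).min' ⟨k, mem_orb_self σ k⟩

lemma orbMin_mem (k : Fin n) : orbMin σ k ∈ orb σ k := Finset.min'_mem _ _

lemma orb_orbMin (k : Fin n) : orb σ (orbMin σ k) = orb σ k :=
  orb_eq_of_mem σ (orbMin_mem σ k)

lemma orbMin_eq_self_iff (k : Fin n) : orbMin σ k = k ↔ IsOrbMin σ k := by
  rw [isOrbMin_iff]
  constructor
  · intro h x hx
    rw [← h]; exact Finset.min'_le _ _ hx
  · intro h
    exact le_antisymm (Finset.min'_le _ _ (mem_orb_self σ k)) (h _ (orbMin_mem σ k))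

lemma isOrbMin_orbMin (k : Fin n) : IsOrbMin σ (orbMin σ k) := by
  rw [← orbMin_eq_self_iff]
  unfold orbMin
  congr 1
  exact orb_orbMin σ k

lemma orbMin_eq_of_mem {k m : Fin n} (h : k ∈ orb σ m) (hm : IsOrbMin σ m) :
    orbMin σ k = m := by
  have h1 : orb σ k = orb σ m := orb_eq_of_mem σ h
  have : orbMin σ k = orbMin σ m := by unfold orbMin; congr 1
  rw [this, (orbMin_eq_self_iff σ m).2 hm]

/-- key combinatorial fact: the cycle lengths at the orbit minima sum to `n` -/
lemma sum_per_orbMin :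
    ∑ k ∈ Finset.univ.filter (IsOrbMin σ), minimalPeriod ⇑σ k = n := by
  have key : (Finset.univ : Finset (Fin n)).card =
      ∑ m ∈ Finset.univ.filter (IsOrbMin σ),
        (Finset.univ.filter fun x => orbMin σ x = m).card := by
    apply Finset.card_eq_sum_card_fiberwise
    intro x _
    exact Finset.mem_filter.2 ⟨Finset.mem_univ _, isOrbMin_orbMin σ x⟩
  rw [Finset.card_univ, Fintype.card_fin] at key
  conv_rhs => rw [key]
  apply Finset.sum_congr rfl
  intro m hm
  have hm' : IsOrbMin σ m := (Finset.mem_filter.1 hm).2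
  have : Finset.univ.filter (fun x => orbMin σ x = m) = orb σ m := by
    ext x
    simp only [Finset.mem_filter, Finset.mem_univ, true_and]
    constructor
    · rintro rfl
      rw [orb_orbMin σ x]; exact mem_orb_self σ _
    · intro hx
      exact orbMin_eq_of_mem σ hx hm'
  rw [this, card_orb]

/-- all the positions visited in the Moore term for `σ`, flattened into one list -/
noncomputable def posList : List (Fin n × Fin n) :=
  ((((List.finRange n).filter fun k => decide (∀ j ∈ List.range n, k ≤ (⇑σ)^[j] k)).reverse).map
    fun k => (List.range (Function.minimalPeriod (⇑σ) k)).map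
      fun t => ((⇑σ)^[t] k, (⇑σ)^[t + 1] k)).flatten

lemma minList_sum {M : Type*} [AddCommMonoid M] (g : Fin n → M) :
    ((((List.finRange n).filter fun k =>
        decide (∀ j ∈ List.range n, k ≤ (⇑σ)^[j] k)).reverse).map g).sum
      = ∑ k ∈ Finset.univ.filter (IsOrbMin σ), g k := by
  rw [List.map_reverse, List.sum_reverse]
  have h : Finset.univ.filter (IsOrbMin σ) =
      ⟨↑((List.finRange n).filter fun k => decide (∀ j ∈ List.range n, k ≤ (⇑σ)^[j] k)),
        ((List.nodup_finRange n).filter _)⟩ := by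
    ext x
    simp [IsOrbMin, List.mem_filter]
  rw [h, Finset.sum_eq_multiset_sum]
  exact (Multiset.sum_coe _).symm

lemma length_posList : (posList σ).length = n := by
  rw [posList, List.length_flatten, List.map_map]
  have h2 : (List.length ∘ fun k => List.map (fun t => ((⇑σ)^[t] k, (⇑σ)^[t + 1] k))
      (List.range (Function.minimalPeriod (⇑σ) k))) = fun k => Function.minimalPeriod ⇑σ k := by
    funext k; simp
  rw [h2, minList_sum σ (fun k => Function.minimalPeriod ⇑σ k)]
  exact sum_per_orbMin σ

/-- the `t`-th position visited in the Moore term for `σ` -/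
noncomputable def posf (t : Fin n) : Fin n × Fin n :=
  (posList σ).get (Fin.cast (length_posList σ).symm t)

lemma mooreTerm_eq_map (A : Matrix (Fin n) (Fin n) (Quaternion ℝ)) :
    mooreTerm A σ = ((posList σ).map fun p => A p.1 p.2).prod := by
  rw [mooreTerm, posList, List.map_flatten, List.prod_flatten, List.map_map, List.map_map]
  congr 1
  apply List.map_congr_left
  intro k _
  simp [cycleFactor, List.map_map]
  rfl

lemma mooreTerm_eq_ofFn (A : Matrix (Fin n) (Fin n) (Quaternion ℝ)) :
    mooreTerm A σ = (List.ofFn fun t : Fin n => A (posf σ t).1 (posf σ t).2).prod := by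
  rw [mooreTerm_eq_map]
  conv_lhs => rw [← List.ofFn_get (posList σ)]
  rw [List.map_ofFn, List.ofFn_congr (length_posList σ)]
  rfl

lemma re_sum {ι : Type*} (s : Finset ι) (f : ι → Quaternion ℝ) :
    (∑ i ∈ s, f i).re = ∑ i ∈ s, (f i).re := by
  induction s using Finset.cons_induction with
  | empty => simp; rfl
  | cons a s ha ih => rw [Finset.sum_cons, Finset.sum_cons, Quaternion.re_add, ih]

lemma prod_ofFn_sum_smul {m nv : ℕ} (lam : Fin nv → ℝ) (g : Fin nv → Fin m → Quaternion ℝ) :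
    (List.ofFn fun t => ∑ i : Fin nv, lam i • g i t).prod
      = ∑ f : Fin m → Fin nv, (∏ t, lam (f t)) • (List.ofFn fun t => g (f t) t).prod := by
  induction m with
  | zero =>
      have h1 : ∑ f : Fin 0 → Fin nv,
            (∏ t : Fin 0, lam (f t)) • (List.ofFn fun t : Fin 0 => g (f t) t).prod
          = ∑ _f : Fin 0 → Fin nv, (1 : Quaternion ℝ) :=
        Finset.sum_congr rfl (fun f _ => by simp)
      rw [h1, Finset.sum_const, Finset.card_univ]
      simp [Fintype.card_pi]
  | succ m ih =>
      rw [List.ofFn_succ, List.prod_cons, ih (fun i t => g i t.succ),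
        ← ((Fin.consEquiv (fun _ : Fin (m+1) => Fin nv)).sum_comp
            fun f => (∏ t : Fin (m+1), lam (f t)) • (List.ofFn fun t => g (f t) t).prod),
        Finset.mul_sum]
      rw [Fintype.sum_prod_type]
      rw [Finset.sum_comm]
      apply Finset.sum_congr rfl
      intro f' _
      rw [Finset.sum_mul]
      apply Finset.sum_congr rfl
      intro i _
      simp only [Fin.consEquiv_apply, Fin.prod_univ_succ, Fin.cons_zero, Fin.cons_succ,
        List.ofFn_succ, List.prod_cons]
      rw [smul_mul_assoc, mul_smul_comm, mul_smul]

lemma prod_ofFn_update {m : ℕ} (g : Fin m → Quaternion ℝ) (t₀ : Fin m) (c d : ℝ)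
    (x y : Quaternion ℝ) :
    (List.ofFn (Function.update g t₀ (c • x + d • y))).prod
      = c • (List.ofFn (Function.update g t₀ x)).prod
        + d • (List.ofFn (Function.update g t₀ y)).prod := by
  obtain ⟨l₁, l₂, h⟩ := List.append_of_mem (List.mem_finRange t₀)
  have hnd := List.nodup_finRange m
  rw [h] at hnd
  rw [List.nodup_append] at hnd
  obtain ⟨-, hnd2, hdisj⟩ := hnd
  have ht1 : t₀ ∉ l₁ := fun hmem => hdisj t₀ hmem t₀ List.mem_cons_self rfl
  have ht2 : t₀ ∉ l₂ := (List.nodup_cons.1 hnd2).1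
  have key : ∀ v : Quaternion ℝ, (List.ofFn (Function.update g t₀ v)).prod
      = (l₁.map g).prod * v * (l₂.map g).prod := by
    intro v
    rw [List.ofFn_eq_map, h, List.map_append, List.map_cons, List.prod_append, List.prod_cons,
      Function.update_self]
    have e1 : l₁.map (Function.update g t₀ v) = l₁.map g :=
      List.map_congr_left fun a ha =>
        Function.update_of_ne (fun (he : a = t₀) => ht1 (he ▸ ha)) _ _
    have e2 : l₂.map (Function.update g t₀ v) = l₂.map g :=
      List.map_congr_left fun a ha =>
        Function.update_of_ne (fun (he : a = t₀) => ht2 (he ▸ ha)) _ _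
    rw [e1, e2, mul_assoc]
  rw [key, key, key, mul_add, add_mul, mul_smul_comm, mul_smul_comm, smul_mul_assoc,
    smul_mul_assoc]

/-- the fully multilinear "mixed Moore term" functional -/
noncomputable def Dfun {n : ℕ} (B : Fin n → Matrix (Fin n) (Fin n) (Quaternion ℝ)) : ℝ :=
  (∑ σ : Equiv.Perm (Fin n),
    (((Equiv.Perm.sign σ : ℤ) : ℝ) : Quaternion ℝ) *
      (List.ofFn fun t : Fin n => B t (posf σ t).1 (posf σ t).2).prod).re

lemma mooreDet_eq_Dfun {n : ℕ} (A : Matrix (Fin n) (Fin n) (Quaternion ℝ)) :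
    mooreDet A = Dfun (fun _ => A) := by
  rw [mooreDet, Dfun]
  congr 1
  exact Finset.sum_congr rfl fun σ _ => by rw [mooreTerm_eq_ofFn]

/-- master expansion: the Moore determinant of a linear combination -/
lemma mooreDet_sum_smul {n : ℕ} (A : Fin n → Matrix (Fin n) (Fin n) (Quaternion ℝ))
    (lam : Fin n → ℝ) :
    mooreDet (∑ i, lam i • A i)
      = ∑ f : Fin n → Fin n, (∏ t, lam (f t)) * Dfun (A ∘ f) := by
  rw [mooreDet]
  have hterm : ∀ σ : Equiv.Perm (Fin n), mooreTerm (∑ i, lam i • A i) σ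
      = ∑ f : Fin n → Fin n, (∏ t, lam (f t)) •
          (List.ofFn fun t => A (f t) (posf σ t).1 (posf σ t).2).prod := by
    intro σ
    rw [mooreTerm_eq_ofFn]
    have he : (fun t : Fin n => (∑ i, lam i • A i) (posf σ t).1 (posf σ t).2)
        = fun t => ∑ i, lam i • (A i (posf σ t).1 (posf σ t).2) := by
      funext t
      simp [Matrix.sum_apply]
    rw [he]
    exact prod_ofFn_sum_smul lam (fun i t => A i (posf σ t).1 (posf σ t).2)
  calc (∑ σ : Equiv.Perm (Fin n),
          (((Equiv.Perm.sign σ : ℤ) : ℝ) : Quaternion ℝ) * mooreTerm (∑ i, lam i • A i) σ).re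
      = (∑ σ : Equiv.Perm (Fin n), ∑ f : Fin n → Fin n, (∏ t, lam (f t)) •
          ((((Equiv.Perm.sign σ : ℤ) : ℝ) : Quaternion ℝ) *
            (List.ofFn fun t => A (f t) (posf σ t).1 (posf σ t).2).prod)).re := by
        congr 1
        apply Finset.sum_congr rfl
        intro σ _
        rw [hterm σ, Finset.mul_sum]
        exact Finset.sum_congr rfl fun f _ => (mul_smul_comm (_ : ℝ) (_ : Quaternion ℝ) _)
    _ = ∑ f : Fin n → Fin n, (∏ t, lam (f t)) * Dfun (A ∘ f) := by
        rw [Finset.sum_comm, re_sum]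
        apply Finset.sum_congr rfl
        intro f _
        rw [← Finset.smul_sum, Quaternion.re_smul, Dfun]
        rfl

/-- `Dfun` is `ℝ`-linear in each slot -/
lemma Dfun_update {n : ℕ} (B : Fin n → Matrix (Fin n) (Fin n) (Quaternion ℝ)) (t₀ : Fin n)
    (c d : ℝ) (X Y : Matrix (Fin n) (Fin n) (Quaternion ℝ)) :
    Dfun (Function.update B t₀ (c • X + d • Y))
      = c * Dfun (Function.update B t₀ X) + d * Dfun (Function.update B t₀ Y) := by
  have key : ∀ σ : Equiv.Perm (Fin n), ∀ V : Matrix (Fin n) (Fin n) (Quaternion ℝ),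
      (fun t => (Function.update B t₀ V) t (posf σ t).1 (posf σ t).2)
        = Function.update (fun t => B t (posf σ t).1 (posf σ t).2) t₀
            (V (posf σ t₀).1 (posf σ t₀).2) := by
    intro σ V
    funext t
    by_cases ht : t = t₀
    · subst ht; simp
    · simp [Function.update_of_ne ht]
  have hσ : ∀ σ : Equiv.Perm (Fin n),
      (List.ofFn fun t => (Function.update B t₀ (c • X + d • Y)) t
          (posf σ t).1 (posf σ t).2).prod
        = c • (List.ofFn fun t => (Function.update B t₀ X) t (posf σ t).1 (posf σ t).2).prod
          + d • (List.ofFn fun t => (Function.update B t₀ Y) t (posf σ t).1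
              (posf σ t).2).prod := by
    intro σ
    rw [key σ (c • X + d • Y), key σ X, key σ Y]
    have : (c • X + d • Y) (posf σ t₀).1 (posf σ t₀).2
        = c • (X (posf σ t₀).1 (posf σ t₀).2) + d • (Y (posf σ t₀).1 (posf σ t₀).2) := by
      simp
    rw [this]
    exact prod_ofFn_update _ _ _ _ _ _
  rw [Dfun, Dfun, Dfun]
  have : ∀ σ : Equiv.Perm (Fin n),
      (((Equiv.Perm.sign σ : ℤ) : ℝ) : Quaternion ℝ) *
        (List.ofFn fun t => (Function.update B t₀ (c • X + d • Y)) t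
          (posf σ t).1 (posf σ t).2).prod
      = c • ((((Equiv.Perm.sign σ : ℤ) : ℝ) : Quaternion ℝ) *
          (List.ofFn fun t => (Function.update B t₀ X) t (posf σ t).1 (posf σ t).2).prod)
        + d • ((((Equiv.Perm.sign σ : ℤ) : ℝ) : Quaternion ℝ) *
          (List.ofFn fun t => (Function.update B t₀ Y) t (posf σ t).1 (posf σ t).2).prod) := by
    intro σ
    rw [hσ σ, mul_add, mul_smul_comm, mul_smul_comm]
  rw [Finset.sum_congr rfl fun σ _ => this σ, Finset.sum_add_distrib, ← Finset.smul_sum,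
    ← Finset.smul_sum, Quaternion.re_add, Quaternion.re_smul, Quaternion.re_smul]
  rfl

lemma neg_one_pow_sub {m u : ℕ} (h : u ≤ m) : (-1 : ℝ) ^ (m - u) = (-1) ^ m * (-1) ^ u := by
  have h1 : (-1 : ℝ) ^ (m - u) * (-1) ^ u = (-1) ^ m := by
    rw [← pow_add, Nat.sub_add_cancel h]
  have h2 : ((-1 : ℝ) ^ u) * ((-1) ^ u) = 1 := by
    rw [← pow_add, ← two_mul, pow_mul]; norm_num
  calc (-1 : ℝ) ^ (m - u) = (-1) ^ (m - u) * ((-1) ^ u * (-1) ^ u) := by rw [h2, mul_one]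
    _ = ((-1) ^ (m - u) * (-1) ^ u) * (-1) ^ u := by ring
    _ = (-1) ^ m * (-1) ^ u := by rw [h1]

/-- alternating-sum extraction identity -/
lemma alt_sum {n : ℕ} (T : Finset (Fin n)) :
    ∑ S : Finset (Fin n), (-1 : ℝ) ^ (n - S.card) * (if T ⊆ S then 1 else 0)
      = if T = Finset.univ then 1 else 0 := by
  have h1 : ∑ S : Finset (Fin n), (-1 : ℝ) ^ (n - S.card) * (if T ⊆ S then 1 else 0)
      = ∑ S ∈ Finset.univ.filter (fun S => T ⊆ S), (-1 : ℝ) ^ (n - S.card) := by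
    rw [Finset.sum_filter]
    apply Finset.sum_congr rfl
    intro S _
    split <;> simp
  rw [h1]
  have h2 : ∑ S ∈ Finset.univ.filter (fun S => T ⊆ S), (-1 : ℝ) ^ (n - S.card)
      = ∑ U ∈ Tᶜ.powerset, (-1 : ℝ) ^ (n - (T.card + U.card)) := by
    apply Finset.sum_bij' (fun S _ => S \ T) (fun U _ => U ∪ T)
    · intro S hS
      rw [Finset.mem_powerset]
      intro x hx
      rw [Finset.mem_sdiff] at hx
      simpa [Finset.mem_compl] using hx.2
    · intro U hU
      rw [Finset.mem_powerset] at hU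
      exact Finset.mem_filter.2 ⟨Finset.mem_univ _, Finset.subset_union_right⟩
    · intro S hS
      exact Finset.sdiff_union_of_subset (Finset.mem_filter.1 hS).2
    · intro U hU
      rw [Finset.mem_powerset] at hU
      apply Finset.union_sdiff_cancel_right
      intro V hVU hVT x hx
      have h1 := hU (hVU hx)
      rw [Finset.mem_compl] at h1
      exact absurd (hVT hx) h1
    · intro S hS
      have hsub := (Finset.mem_filter.1 hS).2
      congr 2
      rw [Finset.card_sdiff_of_subset hsub]
      have := Finset.card_le_card hsub
      omega
  rw [h2]
  have h3 : ∀ U ∈ Tᶜ.powerset, (-1 : ℝ) ^ (n - (T.card + U.card))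
      = (-1) ^ (n - T.card) * (-1) ^ U.card := by
    intro U hU
    rw [Finset.mem_powerset] at hU
    have hc : U.card ≤ n - T.card := by
      have h4 := Finset.card_le_card hU
      rw [Finset.card_compl, Fintype.card_fin] at h4
      exact h4
    rw [← Nat.sub_sub]
    exact neg_one_pow_sub hc
  rw [Finset.sum_congr rfl h3, ← Finset.mul_sum]
  have h5 : ∑ U ∈ Tᶜ.powerset, (-1 : ℝ) ^ U.card
      = if Tᶜ = ∅ then 1 else 0 := by
    have h4 := congrArg (Int.cast : ℤ → ℝ) (Finset.sum_powerset_neg_one_pow_card (x := Tᶜ))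
    push_cast at h4
    rw [h4]
  rw [h5]
  by_cases hT : T = Finset.univ
  · have : Tᶜ = ∅ := (Finset.compl_eq_empty_iff T).2 hT
    rw [if_pos this, if_pos hT, hT, mul_one, Finset.card_univ, Fintype.card_fin,
      Nat.sub_self, pow_zero]
  · have : Tᶜ ≠ ∅ := fun h => hT ((Finset.compl_eq_empty_iff T).1 h)
    rw [if_neg this, if_neg hT, mul_zero]

lemma prod_ind_eq_ite {n : ℕ} (S : Finset (Fin n)) (f : Fin n → Fin n) :
    (∏ t : Fin n, if f t ∈ S then (1 : ℝ) else 0)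
      = if Finset.image f Finset.univ ⊆ S then 1 else 0 := by
  by_cases h : Finset.image f Finset.univ ⊆ S
  · rw [if_pos h]
    apply Finset.prod_eq_one
    intro t _
    rw [if_pos (h (Finset.mem_image_of_mem f (Finset.mem_univ t)))]
  · rw [if_neg h]
    rw [Finset.not_subset] at h
    obtain ⟨x, hx1, hx2⟩ := h
    rw [Finset.mem_image] at hx1
    obtain ⟨t, _, rfl⟩ := hx1
    exact Finset.prod_eq_zero (Finset.mem_univ t) (if_neg hx2)

lemma indicator_sum {n : ℕ} (S : Finset (Fin n))
    (B : Fin n → Matrix (Fin n) (Fin n) (Quaternion ℝ)) :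
    (∑ i ∈ S, B i) = ∑ i, (if i ∈ S then (1 : ℝ) else 0) • B i := by
  have : ∀ i : Fin n, (if i ∈ S then (1 : ℝ) else 0) • B i
      = if i ∈ S then B i else 0 := by
    intro i; split <;> simp
  rw [Finset.sum_congr rfl fun i _ => this i, Finset.sum_ite_mem, Finset.univ_inter]

/-- the mixed discriminant as an average over permutations -/
lemma mixedDisc_eq_sum_perm {n : ℕ} (B : Fin n → Matrix (Fin n) (Fin n) (Quaternion ℝ)) :
    mixedDisc B = ((n.factorial : ℝ))⁻¹ * ∑ τ : Equiv.Perm (Fin n), Dfun (B ∘ ⇑τ) := by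
  rw [mixedDisc]
  congr 1
  calc ∑ S : Finset (Fin n), (-1 : ℝ) ^ (n - S.card) * mooreDet (∑ i ∈ S, B i)
      = ∑ S : Finset (Fin n), ∑ f : Fin n → Fin n,
          (-1 : ℝ) ^ (n - S.card) * ((∏ t, if f t ∈ S then (1 : ℝ) else 0) * Dfun (B ∘ f)) := by
        apply Finset.sum_congr rfl
        intro S _
        rw [indicator_sum S B, mooreDet_sum_smul, Finset.mul_sum]
    _ = ∑ f : Fin n → Fin n,
          (∑ S : Finset (Fin n), (-1 : ℝ) ^ (n - S.card) *
            (if Finset.image f Finset.univ ⊆ S then (1:ℝ) else 0)) * Dfun (B ∘ f) := by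
        rw [Finset.sum_comm]
        apply Finset.sum_congr rfl
        intro f _
        rw [Finset.sum_mul]
        apply Finset.sum_congr rfl
        intro S _
        rw [prod_ind_eq_ite, mul_assoc]
    _ = ∑ f : Fin n → Fin n,
          (if Function.Surjective f then (1:ℝ) else 0) * Dfun (B ∘ f) := by
        apply Finset.sum_congr rfl
        intro f _
        rw [alt_sum]
        congr 1
        have himg : Finset.image f Finset.univ = Finset.univ ↔ Function.Surjective f := by
          constructor
          · intro h y
            have : y ∈ Finset.image f Finset.univ := by rw [h]; exact Finset.mem_univ y
            rw [Finset.mem_image] at this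
            obtain ⟨x, _, hx⟩ := this
            exact ⟨x, hx⟩
          · intro h
            apply Finset.eq_univ_of_forall
            intro y
            obtain ⟨x, hx⟩ := h y
            exact Finset.mem_image.2 ⟨x, Finset.mem_univ x, hx⟩
        simp [himg]
    _ = ∑ f ∈ Finset.univ.filter (fun f : Fin n → Fin n => Function.Surjective f),
          Dfun (B ∘ f) := by
        rw [Finset.sum_filter]
        apply Finset.sum_congr rfl
        intro f _
        split <;> simp
    _ = ∑ τ : Equiv.Perm (Fin n), Dfun (B ∘ ⇑τ) := by
        have hbij : ∀ f ∈ Finset.univ.filter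
            (fun f : Fin n → Fin n => Function.Surjective f), Function.Bijective f :=
          fun f hf => (Fintype.bijective_iff_surjective_and_card f).2
            ⟨(Finset.mem_filter.1 hf).2, rfl⟩
        apply Finset.sum_nbij'
          (i := fun f => if h : Function.Bijective f then Equiv.ofBijective f h else Equiv.refl (Fin n))
          (j := fun τ => ⇑τ)
        · intro f hf
          exact Finset.mem_univ _
        · intro τ _
          exact Finset.mem_filter.2 ⟨Finset.mem_univ _, τ.surjective⟩
        · intro f hf
          rw [dif_pos (hbij f hf)]
          rfl
        · intro τ _
          rw [dif_pos τ.bijective]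
          exact Equiv.ext fun x => rfl
        · intro f hf
          rw [dif_pos (hbij f hf)]
          rfl

/-- the canonical homogeneous polynomial representing `lam ↦ mooreDet (∑ lam i • A i)` -/
noncomputable def mPoly {n : ℕ} (A : Fin n → Matrix (Fin n) (Fin n) (Quaternion ℝ)) :
    MvPolynomial (Fin n) ℝ :=
  ∑ f : Fin n → Fin n, MvPolynomial.C (Dfun (A ∘ f)) * ∏ t : Fin n, MvPolynomial.X (f t)

lemma mPoly_homogeneous {n : ℕ} (A : Fin n → Matrix (Fin n) (Fin n) (Quaternion ℝ)) :
    (mPoly A).IsHomogeneous n := by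
  apply MvPolynomial.IsHomogeneous.sum
  intro f _
  have h1 : (∏ t : Fin n, (MvPolynomial.X (f t) : MvPolynomial (Fin n) ℝ)).IsHomogeneous n := by
    have h2 := MvPolynomial.IsHomogeneous.prod Finset.univ
      (fun t => (MvPolynomial.X (f t) : MvPolynomial (Fin n) ℝ)) (fun _ => 1)
      (fun t _ => MvPolynomial.isHomogeneous_X _ _)
    simpa using h2
  have h3 := (MvPolynomial.isHomogeneous_C (Fin n) (Dfun (A ∘ f))).mul h1
  simpa using h3

lemma mPoly_eval {n : ℕ} (A : Fin n → Matrix (Fin n) (Fin n) (Quaternion ℝ)) (lam : Fin n → ℝ) :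
    MvPolynomial.eval lam (mPoly A) = mooreDet (∑ i, lam i • A i) := by
  rw [mooreDet_sum_smul, mPoly, map_sum]
  apply Finset.sum_congr rfl
  intro f _
  rw [_root_.map_mul, MvPolynomial.eval_C, map_prod]
  simp only [MvPolynomial.eval_X]
  exact mul_comm _ _

lemma prod_ind_pow {n : ℕ} (S : Finset (Fin n)) (d : Fin n →₀ ℕ) :
    (∏ i : Fin n, (if i ∈ S then (1 : ℝ) else 0) ^ (d i))
      = if d.support ⊆ S then 1 else 0 := by
  by_cases h : d.support ⊆ S
  · rw [if_pos h]
    apply Finset.prod_eq_one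
    intro i _
    by_cases hi : i ∈ S
    · rw [if_pos hi, one_pow]
    · have : d i = 0 := by
        by_contra hd
        exact hi (h (Finsupp.mem_support_iff.2 hd))
      rw [this, pow_zero]
  · rw [if_neg h]
    rw [Finset.not_subset] at h
    obtain ⟨i, hi1, hi2⟩ := h
    apply Finset.prod_eq_zero (Finset.mem_univ i)
    rw [if_neg hi2]
    exact zero_pow (Finsupp.mem_support_iff.1 hi1)

lemma d₀_apply {n : ℕ} (i : Fin n) : (∑ j : Fin n, Finsupp.single j 1) i = 1 := by
  rw [Finset.sum_apply']
  simp only [Finsupp.single_apply]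
  rw [Finset.sum_ite_eq' Finset.univ i (fun _ => 1)]
  simp

/-- polarization/coefficient-extraction for a homogeneous polynomial of degree `n` -/
lemma coeff_extract {n : ℕ} (P : MvPolynomial (Fin n) ℝ) (hP : P.IsHomogeneous n) :
    ∑ S : Finset (Fin n), (-1 : ℝ) ^ (n - S.card) *
        MvPolynomial.eval (fun i => if i ∈ S then (1 : ℝ) else 0) P
      = MvPolynomial.coeff (∑ i : Fin n, Finsupp.single i 1) P := by
  calc ∑ S : Finset (Fin n), (-1 : ℝ) ^ (n - S.card) *
        MvPolynomial.eval (fun i => if i ∈ S then (1 : ℝ) else 0) P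
      = ∑ S : Finset (Fin n), ∑ d ∈ P.support, MvPolynomial.coeff d P *
          ((-1 : ℝ) ^ (n - S.card) * (if d.support ⊆ S then 1 else 0)) := by
        apply Finset.sum_congr rfl
        intro S _
        rw [MvPolynomial.eval_eq', Finset.mul_sum]
        apply Finset.sum_congr rfl
        intro d _
        rw [prod_ind_pow]
        ring
    _ = ∑ d ∈ P.support, MvPolynomial.coeff d P *
          (if d.support = Finset.univ then 1 else 0) := by
        rw [Finset.sum_comm]
        apply Finset.sum_congr rfl
        intro d _
        rw [← Finset.mul_sum, alt_sum]
    _ = ∑ d ∈ P.support,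
          (if d = ∑ i : Fin n, Finsupp.single i 1
            then MvPolynomial.coeff (∑ i : Fin n, Finsupp.single i 1) P else 0) := by
        apply Finset.sum_congr rfl
        intro d hd
        by_cases h : d.support = Finset.univ
        · have hge : ∀ i : Fin n, 1 ≤ d i := by
            intro i
            have : i ∈ d.support := h ▸ Finset.mem_univ i
            exact Nat.one_le_iff_ne_zero.2 (Finsupp.mem_support_iff.1 this)
          have hsum : ∑ i : Fin n, d i = n := by
            have h5 := hP (MvPolynomial.mem_support_iff.1 hd)
            have h6 : (Finsupp.weight 1) d = ∑ i ∈ d.support, d i := by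
              simp [Finsupp.weight_apply, Finsupp.sum]
            rw [h6, h] at h5
            simpa using h5
          have hone : ∀ i : Fin n, d i = 1 := by
            have h7 : ∑ i : Fin n, (1 : ℕ) = ∑ i : Fin n, d i := by
              rw [hsum]; simp
            have h8 := (Finset.sum_eq_sum_iff_of_le (fun i _ => hge i)).1 h7
            intro i
            exact (h8 i (Finset.mem_univ i)).symm
          have hdd : d = ∑ i : Fin n, Finsupp.single i 1 := by
            ext i
            rw [hone i, d₀_apply]
          rw [if_pos h, if_pos hdd, hdd, mul_one]
        · have hdd : d ≠ ∑ i : Fin n, Finsupp.single i 1 := by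
            intro he
            apply h
            apply Finset.eq_univ_of_forall
            intro i
            rw [Finsupp.mem_support_iff, he, d₀_apply]
            exact one_ne_zero
          rw [if_neg h, if_neg hdd, mul_zero]
    _ = MvPolynomial.coeff (∑ i : Fin n, Finsupp.single i 1) P := by
        rw [Finset.sum_ite_eq' P.support]
        split
        · rfl
        · rename_i h
          exact (MvPolynomial.notMem_support_iff.1 h).symm

end MooreAux


/-- Definition 2.12 and Proposition 2.13: `det (λ₁A₁ + ⋯ + λₙAₙ)` is a
homogeneous polynomial of degree `n` in the real variables `λᵢ`; the mixed discriminant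
(`1/n!` times the coefficient of `λ₁⋯λₙ`, which is what `mixedDisc` computes) is symmetric
in its arguments, `ℝ`-linear in each argument, and `det (A, …, A) = det A`. -/
theorem mixedDisc_props
    (n : ℕ) (A : Fin n → Matrix (Fin n) (Fin n) (Quaternion ℝ))
    (hA : ∀ i, (A i).IsHermitian) :
    (∃ P : MvPolynomial (Fin n) ℝ, P.IsHomogeneous n ∧
        ∀ lam : Fin n → ℝ,
          MvPolynomial.eval lam P = mooreDet (∑ i, lam i • A i)) ∧
    (∀ P : MvPolynomial (Fin n) ℝ, P.IsHomogeneous n →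
        (∀ lam : Fin n → ℝ,
          MvPolynomial.eval lam P = mooreDet (∑ i, lam i • A i)) →
        mixedDisc A =
          ((n.factorial : ℝ))⁻¹ * MvPolynomial.coeff (∑ i : Fin n, Finsupp.single i 1) P) ∧
    (∀ σ : Equiv.Perm (Fin n), mixedDisc (A ∘ σ) = mixedDisc A) ∧
    (∀ (i : Fin n) (c d : ℝ) (X Y : Matrix (Fin n) (Fin n) (Quaternion ℝ)),
        X.IsHermitian → Y.IsHermitian →
        mixedDisc (Function.update A i (c • X + d • Y)) =
          c * mixedDisc (Function.update A i X) + d * mixedDisc (Function.update A i Y)) ∧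
    (∀ B : Matrix (Fin n) (Fin n) (Quaternion ℝ), B.IsHermitian →
        mixedDisc (fun _ => B) = mooreDet B) := by
  clear hA
  open MooreAux in
  refine ⟨⟨mPoly A, mPoly_homogeneous A, fun lam => mPoly_eval A lam⟩, ?_, ?_, ?_, ?_⟩
  · -- coefficient formula
    intro P hP heval
    rw [mixedDisc]
    congr 1
    calc ∑ S : Finset (Fin n), (-1 : ℝ) ^ (n - S.card) * mooreDet (∑ i ∈ S, A i)
        = ∑ S : Finset (Fin n), (-1 : ℝ) ^ (n - S.card) *
            MvPolynomial.eval (fun i => if i ∈ S then (1 : ℝ) else 0) P := by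
          refine Finset.sum_congr rfl fun S _ => ?_
          rw [heval, indicator_sum]
      _ = MvPolynomial.coeff (∑ i : Fin n, Finsupp.single i 1) P := coeff_extract P hP
  · -- symmetry
    intro σ
    rw [mixedDisc, mixedDisc]
    congr 1
    apply Fintype.sum_equiv σ.finsetCongr
    intro S
    rw [Equiv.finsetCongr_apply, Finset.card_map, Finset.sum_map]
    rfl
  · -- multilinearity
    intro i c d X Y _ _
    have hcomp : ∀ (V : Matrix (Fin n) (Fin n) (Quaternion ℝ)) (τ : Equiv.Perm (Fin n)),
        (Function.update A i V) ∘ ⇑τ = Function.update (A ∘ ⇑τ) (τ.symm i) V := by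
      intro V τ
      funext t
      by_cases ht : t = τ.symm i
      · subst ht
        have h9 : τ (τ.symm i) = i := τ.apply_symm_apply i
        simp only [Function.comp_apply, Function.update_self]
        rw [h9, Function.update_self]
      · have hτ : τ t ≠ i := fun h => ht (by rw [← h]; simp)
        simp [Function.comp_apply, Function.update_of_ne ht, Function.update_of_ne hτ]
    rw [mixedDisc_eq_sum_perm, mixedDisc_eq_sum_perm, mixedDisc_eq_sum_perm]
    have hτ : ∀ τ : Equiv.Perm (Fin n),
        Dfun ((Function.update A i (c • X + d • Y)) ∘ ⇑τ)
          = c * Dfun ((Function.update A i X) ∘ ⇑τ)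
            + d * Dfun ((Function.update A i Y) ∘ ⇑τ) := by
      intro τ
      rw [hcomp, hcomp, hcomp]
      exact Dfun_update (A ∘ ⇑τ) (τ.symm i) c d X Y
    rw [Finset.sum_congr rfl fun τ _ => hτ τ, Finset.sum_add_distrib, ← Finset.mul_sum,
      ← Finset.mul_sum]
    ring
  · -- diagonal
    intro B _
    rw [mixedDisc_eq_sum_perm]
    have hτ : ∀ τ : Equiv.Perm (Fin n), Dfun ((fun _ => B) ∘ ⇑τ) = Dfun (fun _ => B) :=
      fun τ => rfl
    rw [Finset.sum_congr rfl fun τ _ => hτ τ, Finset.sum_const, Finset.card_univ,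
      Fintype.card_perm, Fintype.card_fin, nsmul_eq_mul, ← mul_assoc,
      inv_mul_cancel₀ (by exact_mod_cast (Nat.factorial_ne_zero n)), one_mul,
      ← mooreDet_eq_Dfun]
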